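/- arXiv:2402.13377 — 3 statements merged into one kernel-verified Lean document; each statement's English description precedes it below -/
import Mathlib

section
/- Let ω ≠ 0 be a real number, and for t ∈ ℝ let M_ω(t) : ℝ² → ℝ² be the linear map M_ω(t)v = ((1/ω)(−sin(ωt) v₁ + (1 − cos(ωt)) v₂), (1/ω)((cos(ωt) − 1) v₁ − sin(ωt) v₂)). Let F : ℝ → ℝ² be continuous and let X, V : ℝ → ℝ² be C¹ functions satisfying X'(t) = V(t) and V'(t) = F(t) + (ω V₂(t), −ω V₁(t)) for all t. Then for all t ∈ ℝ, the function t ↦ X(t) + M_ω(t) V(t) is differentiable with derivative d/dt [X(t) + M_ω(t) V(t)] = M_ω(t) F(t). -/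
open Real

/-- The linear map `M_ω(t) = D_ω(t)/ω` of the backward free magnetized flow in
dimension 2. -/
noncomputable def Mom2 (ω t : ℝ) (v : Fin 2 → ℝ) : Fin 2 → ℝ :=
  ![(1 / ω) * (-Real.sin (ω * t) * v 0 + (1 - Real.cos (ω * t)) * v 1),
    (1 / ω) * ((Real.cos (ω * t) - 1) * v 0 - Real.sin (ω * t) * v 1)]

/-!
With `J` the clockwise quarter turn of the plane, the magnetic force is `v ∧ B = ω J v`, `J² = -1`
and `M_ω(t) = ω⁻¹ ((1 - cos ωt) J - sin ωt)`. Differentiating in `t` gives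
`∂ₜ M_ω(t) v + M_ω(t) (ω J v) = -v`, so along a characteristic the magnetic part of `V'` and the
velocity `X' = V` cancel, leaving `M_ω(t) F(t)`.
-/

noncomputable def clockwiseRot : (Fin 2 → ℝ) →L[ℝ] Fin 2 → ℝ :=
  ContinuousLinearMap.pi ![ContinuousLinearMap.proj 1, -ContinuousLinearMap.proj 0]

theorem clockwiseRot_apply (v : Fin 2 → ℝ) : clockwiseRot v = ![v 1, -v 0] := by
  ext i; fin_cases i <;> rfl

theorem clockwiseRot_clockwiseRot (v : Fin 2 → ℝ) : clockwiseRot (clockwiseRot v) = -v := by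
  ext i; fin_cases i <;> simp [clockwiseRot_apply]

theorem mom2_eq_smul (ω t : ℝ) (v : Fin 2 → ℝ) :
    Mom2 ω t v = ω⁻¹ • ((1 - cos (ω * t)) • clockwiseRot v - sin (ω * t) • v) := by
  ext i; fin_cases i <;>
    simp only [Mom2, clockwiseRot_apply, Pi.smul_apply, Pi.sub_apply, smul_eq_mul, Fin.zero_eta,
      Fin.mk_one, Matrix.cons_val_zero, Matrix.cons_val_one] <;> ring

theorem hasDerivAt_mom2 {ω t : ℝ} (hω : ω ≠ 0) {V : ℝ → Fin 2 → ℝ} {V' : Fin 2 → ℝ}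
    (hV : HasDerivAt V V' t) :
    HasDerivAt (fun s => Mom2 ω s (V s))
      (Mom2 ω t V' + (sin (ω * t) • clockwiseRot (V t) - cos (ω * t) • V t)) t := by
  have hlin : HasDerivAt (fun s : ℝ => ω * s) ω t := by
    simpa using (hasDerivAt_id t).const_mul ω
  have hJV := clockwiseRot.hasFDerivAt.comp_hasDerivAt t hV
  have hprod :=
    ((hlin.cos.const_sub 1).fun_smul hJV |>.sub (hlin.sin.fun_smul hV)).fun_const_smul ω⁻¹
  simp only [mom2_eq_smul]
  refine hprod.congr_deriv ?_
  simp only [Function.comp_apply]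
  match_scalars <;> field_simp

theorem hasDerivAt_mom2_of_magnetic {ω t : ℝ} (hω : ω ≠ 0) {V : ℝ → Fin 2 → ℝ}
    {F : Fin 2 → ℝ} (hV : HasDerivAt V (F + ω • clockwiseRot (V t)) t) :
    HasDerivAt (fun s => Mom2 ω s (V s)) (Mom2 ω t F - V t) t := by
  convert hasDerivAt_mom2 hω hV using 1
  simp only [mom2_eq_smul, map_add, map_smul, clockwiseRot_clockwiseRot, smul_neg]
  match_scalars <;> field_simp <;> ring

theorem backward_flow_derivative_2d_general
    (ω : ℝ) (hω : ω ≠ 0) (F X V : ℝ → Fin 2 → ℝ)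
    (hX : ∀ t, HasDerivAt X (V t) t)
    (hV : ∀ t, HasDerivAt V (F t + ![ω * V t 1, -(ω * V t 0)]) t) :
    ∀ t, HasDerivAt (fun s => X s + Mom2 ω s (V s)) (Mom2 ω t (F t)) t := by
  intro t
  have hlorentz : ![ω * V t 1, -(ω * V t 0)] = ω • clockwiseRot (V t) := by
    rw [clockwiseRot_apply]
    ext i; fin_cases i <;> simp
  have hVt := hV t
  rw [hlorentz] at hVt
  simpa using (hX t).fun_add (hasDerivAt_mom2_of_magnetic hω hVt)

/-- For planar characteristics `X' = V`, `V' = F + (ω V₂, -ω V₁)`, the composition with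
the backward free magnetized flow `t ↦ X(t) + M_ω(t) V(t)` is differentiable with
derivative `M_ω(t) F(t)`. -/
theorem backward_flow_derivative_2d
    (ω : ℝ) (hω : ω ≠ 0) (F X V : ℝ → Fin 2 → ℝ) (hF : Continuous F)
    (hX : ∀ t, HasDerivAt X (V t) t)
    (hV : ∀ t, HasDerivAt V (F t + ![ω * V t 1, -(ω * V t 0)]) t) :
    ∀ t, HasDerivAt (fun s => X s + Mom2 ω s (V s)) (Mom2 ω t (F t)) t :=
  backward_flow_derivative_2d_general ω hω F X V hX hV
end

section
/- Let ω ≠ 0 be a real number, and for t ∈ ℝ let M_ω(t) : ℝ³ → ℝ³ be the linear map M_ω(t)v = ((1/ω)(−sin(ωt) v₁ + (1 − cos(ωt)) v₂), (1/ω)((cos(ωt) − 1) v₁ − sin(ωt) v₂), −t v₃). Let F : ℝ → ℝ³ be continuous and let X, V : ℝ → ℝ³ be C¹ functions satisfying X'(t) = V(t) and V'(t) = F(t) + V(t) × (0,0,ω) for all t, where × is the cross product on ℝ³. Then for all t ∈ ℝ, the function t ↦ X(t) + M_ω(t) V(t) is differentiable with derivative d/dt [X(t) + M_ω(t) V(t)]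 = M_ω(t) F(t). -/
/-!
By the product rule, `d/dt [X + M(t) V] = V + M'(t) V + M(t) (F + V × b)` with `b = (0,0,ω)`.
Everything except `M(t) F` cancels because of the pointwise identity
`M'(t) v + M(t) (v × b) = -v`, which says that `x + M(t) v` is conserved along the
free magnetized flow `x' = v`, `v' = v × b`.
-/

open Real

/-- The linear map `M_ω(t) = D_ω(t)/ω` of the backward free magnetized flow in
dimension 3. -/
noncomputable def Mom3 (ω t : ℝ) (v : Fin 3 → ℝ) : Fin 3 → ℝ :=
  ![(1 / ω) * (-Real.sin (ω * t) * v 0 + (1 - Real.cos (ω * t)) * v 1),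
    (1 / ω) * ((Real.cos (ω * t) - 1) * v 0 - Real.sin (ω * t) * v 1),
    -t * v 2]

noncomputable def Mom3Deriv (ω t : ℝ) (v : Fin 3 → ℝ) : Fin 3 → ℝ :=
  ![-cos (ω * t) * v 0 + sin (ω * t) * v 1, -sin (ω * t) * v 0 - cos (ω * t) * v 1, -v 2]

theorem Mom3_add (ω t : ℝ) (v w : Fin 3 → ℝ) :
    Mom3 ω t (v + w) = Mom3 ω t v + Mom3 ω t w := by
  ext i
  fin_cases i <;> simp [Mom3] <;> ring

theorem Mom3Deriv_add_Mom3_cross {ω : ℝ} (hω : ω ≠ 0) (t : ℝ) (v : Fin 3 → ℝ) :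
    Mom3Deriv ω t v + Mom3 ω t (crossProduct v ![0, 0, ω]) = -v := by
  ext i
  fin_cases i <;> simp [Mom3, Mom3Deriv, cross_apply] <;> field_simp <;> ring

theorem hasDerivAt_Mom3_apply {ω t : ℝ} (hω : ω ≠ 0) {V : ℝ → Fin 3 → ℝ} {W : Fin 3 → ℝ}
    (hV : HasDerivAt V W t) :
    HasDerivAt (fun s => Mom3 ω s (V s)) (Mom3Deriv ω t (V t) + Mom3 ω t W) t := by
  have hsin : HasDerivAt (fun s => sin (ω * s)) (cos (ω * t) * ω) t := by
    simpa using ((hasDerivAt_id t).const_mul ω).sin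
  have hcos : HasDerivAt (fun s => cos (ω * s)) (-sin (ω * t) * ω) t := by
    simpa using ((hasDerivAt_id t).const_mul ω).cos
  have hVi := hasDerivAt_pi.mp hV
  rw [hasDerivAt_pi]
  intro i
  fin_cases i
  · refine (((hsin.neg.mul (hVi 0)).add
      (((hasDerivAt_const t 1).sub hcos).mul (hVi 1))).const_mul (1 / ω)).congr_deriv ?_
    simp [Mom3, Mom3Deriv]; field_simp; ring
  · refine ((((hcos.sub (hasDerivAt_const t 1)).mul (hVi 0)).sub
      (hsin.mul (hVi 1))).const_mul (1 / ω)).congr_deriv ?_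
    simp [Mom3, Mom3Deriv]; field_simp; ring
  · refine ((hasDerivAt_id t).neg.mul (hVi 2)).congr_deriv ?_
    simp [Mom3, Mom3Deriv]

theorem backward_flow_derivative_3d_general
    (ω : ℝ) (hω : ω ≠ 0) (F X V : ℝ → Fin 3 → ℝ)
    (hX : ∀ t, HasDerivAt X (V t) t)
    (hV : ∀ t, HasDerivAt V (F t + crossProduct (V t) ![0, 0, ω]) t) :
    ∀ t, HasDerivAt (fun s => X s + Mom3 ω s (V s)) (Mom3 ω t (F t)) t := by
  intro t
  refine ((hX t).add (hasDerivAt_Mom3_apply hω (hV t))).congr_deriv ?_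
  rw [Mom3_add, ← add_assoc, add_add_add_comm, Mom3Deriv_add_Mom3_cross hω]
  abel

/-- For three-dimensional characteristics `X' = V`, `V' = F + V × (0,0,ω)`, the
composition with the backward free magnetized flow `t ↦ X(t) + M_ω(t) V(t)` is
differentiable with derivative `M_ω(t) F(t)`. -/
theorem backward_flow_derivative_3d
    (ω : ℝ) (hω : ω ≠ 0) (F X V : ℝ → Fin 3 → ℝ) (hF : Continuous F)
    (hX : ∀ t, HasDerivAt X (V t) t)
    (hV : ∀ t, HasDerivAt V (F t + crossProduct (V t) ![0, 0, ω]) t) :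
    ∀ t, HasDerivAt (fun s => X s + Mom3 ω s (V s)) (Mom3 ω t (F t)) t :=
  backward_flow_derivative_3d_general ω hω F X V hX hV
end

section
/- Let T > 0, C > 0, let J : [0,T] → [0,∞) be integrable, and let Q : [0,T] → ℝ be differentiable with 0 < Q(t) < 1/e for all t ∈ [0,T] and Q'(t) ≤ C J(t) Q(t) √(|log Q(t)|) for all t ∈ [0,T]. If moreover √(−log Q(0)) ≥ (C/2) ∫₀ᵀ J(s) ds, then for all t ∈ [0,T], Q(t) ≤ exp( −( √(−log Q(0)) − (C/2) ∫₀ᵗ J(s) ds )² ). -/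
/-!
Along the solution, `u(t) = √(-log Q(t))` satisfies `u' = -Q' / (2 Q u) ≥ -(C/2) J`, so
`u(t) ≥ u(0) - (C/2) ∫₀ᵗ J`. The smallness assumption on `u(0)` keeps the right-hand side
nonnegative, so it may be squared, which gives `-log Q(t) ≥ (u(0) - (C/2) ∫₀ᵗ J)²`.
-/

open Real MeasureTheory intervalIntegral Set

theorem hasDerivAt_neg_sqrt_neg_log {f : ℝ → ℝ} {f' x : ℝ} (hf : HasDerivAt f f' x)
    (hpos : 0 < f x) (hlt : f x < 1) :
    HasDerivAt (fun u => -√(-log (f u))) (f' / (2 * f x * √(-log (f x)))) x := by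
  have hlog : -log (f x) ≠ 0 := neg_ne_zero.2 (log_neg hpos hlt).ne
  have hneg_log : HasDerivAt (fun u => -log (f u)) (-(f' / f x)) x := (hf.log hpos.ne').neg
  exact (hneg_log.sqrt hlog).neg.congr_deriv (by ring)

theorem div_two_mul_sqrt_neg_log_le {q c y : ℝ} (hy : 0 < y) (hy1 : y < 1)
    (h : q ≤ c * y * √|log y|) : q / (2 * y * √(-log y)) ≤ c / 2 := by
  have hlog : log y < 0 := log_neg hy hy1
  rw [abs_of_neg hlog] at h
  have hsqrt : 0 < √(-log y) := sqrt_pos.2 (neg_pos.2 hlog)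
  rw [div_le_iff₀ (by positivity)]
  linarith

theorem sqrt_neg_log_sub_le_integral {Q J : ℝ → ℝ} {C a b : ℝ} (hab : a ≤ b)
    (hJ : IntegrableOn J (Icc a b))
    (hQ_pos : ∀ t ∈ Icc a b, 0 < Q t) (hQ_lt : ∀ t ∈ Icc a b, Q t < 1)
    (hQ_diff : ∀ t ∈ Icc a b, DifferentiableAt ℝ Q t)
    (hQ' : ∀ t ∈ Ioo a b, deriv Q t ≤ C * J t * Q t * √|log (Q t)|) :
    √(-log (Q a)) - √(-log (Q b)) ≤ C / 2 * ∫ t in a..b, J t := by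
  have hderiv : ∀ t ∈ Icc a b, HasDerivAt (fun u => -√(-log (Q u)))
      (deriv Q t / (2 * Q t * √(-log (Q t)))) t := fun t ht =>
    hasDerivAt_neg_sqrt_neg_log (hQ_diff t ht).hasDerivAt (hQ_pos t ht) (hQ_lt t ht)
  have hftc := sub_le_integral_of_hasDeriv_right_of_le hab
    (fun t ht => (hderiv t ht).continuousAt.continuousWithinAt)
    (fun t ht => (hderiv t (Ioo_subset_Icc_self ht)).hasDerivWithinAt)
    (hJ.const_mul (C / 2))
    (fun t ht => div_two_mul_sqrt_neg_log_le (hQ_pos t (Ioo_subset_Icc_self ht))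
      (hQ_lt t (Ioo_subset_Icc_self ht)) (hQ' t ht) |>.trans_eq (by ring))
  rw [intervalIntegral.integral_const_mul] at hftc
  linarith

theorem le_exp_neg_sq_of_le_sqrt_neg_log {x A : ℝ} (hx : 0 < x) (hx1 : x ≤ 1) (hA : 0 ≤ A)
    (h : A ≤ √(-log x)) : x ≤ exp (-A ^ 2) := by
  rw [← log_le_iff_le_exp hx]
  linarith [(le_sqrt hA (neg_nonneg.2 (log_nonpos hx.le hx1))).1 h]

theorem gronwall_sqrt_log_general
    (T C : ℝ) (hC : 0 < C)
    (J : ℝ → ℝ) (hJ_int : IntegrableOn J (Set.Icc 0 T))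
    (hJ_nonneg : ∀ s ∈ Set.Icc (0 : ℝ) T, 0 ≤ J s)
    (Q : ℝ → ℝ)
    (hQ_pos : ∀ t ∈ Set.Icc (0 : ℝ) T, 0 < Q t)
    (hQ_lt : ∀ t ∈ Set.Icc (0 : ℝ) T, Q t < Real.exp (-1))
    (hQ_diff : ∀ t ∈ Set.Icc (0 : ℝ) T, DifferentiableAt ℝ Q t)
    (hQ' : ∀ t ∈ Set.Icc (0 : ℝ) T,
      deriv Q t ≤ C * J t * Q t * Real.sqrt |Real.log (Q t)|)
    (h0 : Real.sqrt (-Real.log (Q 0)) ≥ (C / 2) * ∫ s in (0 : ℝ)..T, J s) :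
    ∀ t ∈ Set.Icc (0 : ℝ) T,
      Q t ≤ Real.exp
        (-(Real.sqrt (-Real.log (Q 0)) - (C / 2) * ∫ s in (0 : ℝ)..t, J s) ^ 2) := by
  intro t ht
  have hsub : Icc 0 t ⊆ Icc 0 T := Icc_subset_Icc_right ht.2
  have hQ_lt_one : ∀ s ∈ Icc (0 : ℝ) T, Q s < 1 := fun s hs =>
    (hQ_lt s hs).trans (exp_lt_one_iff.2 (by norm_num))
  have hdecay := sqrt_neg_log_sub_le_integral ht.1 (hJ_int.mono_set hsub)
    (fun s hs => hQ_pos s (hsub hs)) (fun s hs => hQ_lt_one s (hsub hs))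
    (fun s hs => hQ_diff s (hsub hs)) (fun s hs => hQ' s (hsub (Ioo_subset_Icc_self hs)))
  have hint_le : ∫ s in (0 : ℝ)..t, J s ≤ ∫ s in (0 : ℝ)..T, J s :=
    integral_mono_interval le_rfl ht.1 ht.2
      ((ae_restrict_iff' measurableSet_Ioc).2 <|
        ae_of_all _ fun s hs => hJ_nonneg s (Ioc_subset_Icc_self hs))
      ((intervalIntegrable_iff_integrableOn_Icc_of_le (ht.1.trans ht.2)).2 hJ_int)
  have hscaled := mul_le_mul_of_nonneg_left hint_le (half_pos hC).le
  exact le_exp_neg_sq_of_le_sqrt_neg_log (hQ_pos t ht) (hQ_lt_one t ht).le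
    (by linarith) (by linarith)

/-- Grönwall lemma with square-root-of-log nonlinearity for the improved (kinetic
Wasserstein) stability estimate: if `0 < Q(t) < 1/e`,
`Q'(t) ≤ C J(t) Q(t) √|log Q(t)|` on `[0,T]` and
`√(-log Q(0)) ≥ (C/2) ∫₀ᵀ J`, then
`Q(t) ≤ exp(-(√(-log Q(0)) - (C/2) ∫₀ᵗ J)²)`. -/
theorem gronwall_sqrt_log
    (T C : ℝ) (hT : 0 < T) (hC : 0 < C)
    (J : ℝ → ℝ) (hJ_int : IntegrableOn J (Set.Icc 0 T))
    (hJ_nonneg : ∀ s ∈ Set.Icc (0 : ℝ) T, 0 ≤ J s)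
    (Q : ℝ → ℝ)
    (hQ_pos : ∀ t ∈ Set.Icc (0 : ℝ) T, 0 < Q t)
    (hQ_lt : ∀ t ∈ Set.Icc (0 : ℝ) T, Q t < Real.exp (-1))
    (hQ_diff : ∀ t ∈ Set.Icc (0 : ℝ) T, DifferentiableAt ℝ Q t)
    (hQ' : ∀ t ∈ Set.Icc (0 : ℝ) T,
      deriv Q t ≤ C * J t * Q t * Real.sqrt |Real.log (Q t)|)
    (h0 : Real.sqrt (-Real.log (Q 0)) ≥ (C / 2) * ∫ s in (0 : ℝ)..T, J s) :
    ∀ t ∈ Set.Icc (0 : ℝ) T,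
      Q t ≤ Real.exp
        (-(Real.sqrt (-Real.log (Q 0)) - (C / 2) * ∫ s in (0 : ℝ)..t, J s) ^ 2) :=
  gronwall_sqrt_log_general T C hC J hJ_int hJ_nonneg Q hQ_pos hQ_lt hQ_diff hQ' h0
end
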